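/- arXiv:1711.02292 — 3 statements merged into one kernel-verified Lean document; each statement's English description precedes it below -/
import Mathlib

section
/- Let q be a prime power and let k be an integer with 2 ≤ k ≤ q−2 if q is odd, and 3 ≤ k ≤ q−3 if q is even. Assume that the covering radius of PRS(q+1,k) equals q−k. Then every polynomial f ∈ F_q[x] of degree at most q−1 with d(u_f, RS(F_q,k)) = q−k satisfies d(u_f, RS(F_q,k−1)) ≤ q−k; in particular, since the covering radius of RS(F_q,k−1) is q−k+1, the word u_f is not a deep hole of RS(F_q,k−1). -/
open Polynomial

/-- The error distance from a word `u` to a code `C`. -/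
noncomputable def errDist {ι F : Type*} [Fintype ι] [DecidableEq F]
    (u : ι → F) (C : Set (ι → F)) : ℕ :=
  sInf {d | ∃ c ∈ C, hammingDist u c = d}

/-- The covering radius of a code `C`. -/
noncomputable def covRad {ι F : Type*} [Fintype ι] [DecidableEq F]
    (C : Set (ι → F)) : ℕ :=
  sSup {d | ∃ u : ι → F, errDist u C = d}

/-- The Reed–Solomon code of dimension `k` with evaluation set all of `F`,
with words indexed by the elements of `F`. -/
def RSq (F : Type*) [Field F] (k : ℕ) : Set (F → F) :=
  {w | ∃ f : F[X], f.degree < (k : ℕ) ∧ ∀ x : F, w x = f.eval x}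

/-- The projective Reed–Solomon code of length `q + 1` and dimension `k`:
words indexed by `Option F`, the coordinate at `some x` is `f(x)` and the coordinate
at `none` is the coefficient of `x^(k-1)` in `f`. -/
def PRS (F : Type*) [Field F] (k : ℕ) : Set (Option F → F) :=
  {w | ∃ f : F[X], f.degree < (k : ℕ) ∧ (∀ x : F, w (some x) = f.eval x) ∧
    w none = f.coeff (k - 1)}

section Aux

variable {ι F : Type*} [Fintype ι] [DecidableEq F]

lemma errDist_le_hamming (u : ι → F) {C : Set (ι → F)} {c : ι → F} (hc : c ∈ C) :
    errDist u C ≤ hammingDist u c :=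
  Nat.sInf_le ⟨c, hc, rfl⟩

lemma exists_hamming_eq_errDist (u : ι → F) {C : Set (ι → F)} (hC : C.Nonempty) :
    ∃ c ∈ C, hammingDist u c = errDist u C := by
  have hne : {d | ∃ c ∈ C, hammingDist u c = d}.Nonempty :=
    ⟨_, hC.choose, hC.choose_spec, rfl⟩
  exact Nat.sInf_mem hne

lemma le_errDist (u : ι → F) {C : Set (ι → F)} {m : ℕ} (hC : C.Nonempty)
    (h : ∀ c ∈ C, m ≤ hammingDist u c) : m ≤ errDist u C := by
  refine le_csInf ⟨hammingDist u hC.choose, hC.choose, hC.choose_spec, rfl⟩ ?_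
  rintro d ⟨c, hc, rfl⟩
  exact h c hc

lemma errDist_le_covRad (u : ι → F) {C : Set (ι → F)} (hC : C.Nonempty) :
    errDist u C ≤ covRad C := by
  refine le_csSup ⟨Fintype.card ι, ?_⟩ ⟨u, rfl⟩
  rintro d ⟨u', rfl⟩
  obtain ⟨c, hc, he⟩ := exists_hamming_eq_errDist u' hC
  exact he ▸ hammingDist_le_card_fintype

lemma hammingDist_option {α : Type*} [Fintype α] (u v : Option α → F) :
    hammingDist u v = (if u none = v none then 0 else 1) +
      hammingDist (fun x => u (some x)) (fun x => v (some x)) := by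
  classical
  simp only [hammingDist, Finset.card_filter]
  rw [Fintype.sum_option]
  congr 1
  split <;> simp_all

end Aux

section Poly

variable {F : Type*} [Field F] [Fintype F] [DecidableEq F]

lemma card_root_filter {p : F[X]} (hp : p ≠ 0) :
    (Finset.univ.filter fun x => p.eval x = 0).card ≤ p.natDegree := by
  apply Polynomial.card_le_degree_of_subset_roots
  intro x hx
  simp only [Finset.mem_val, Finset.mem_filter] at hx
  rw [Polynomial.mem_roots hp]
  exact hx.2

lemma hamming_eval_ge {f g : F[X]} (h : f ≠ g) :
    Fintype.card F - (f - g).natDegree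
      ≤ hammingDist (fun x => f.eval x) (fun x => g.eval x) := by
  classical
  have h1 : (Finset.univ.filter fun x => f.eval x = g.eval x).card ≤ (f - g).natDegree := by
    have := card_root_filter (p := f - g) (sub_ne_zero.mpr h)
    simpa [sub_eq_zero] using this
  have h2 : (Finset.univ.filter fun x => f.eval x = g.eval x).card
      + (Finset.univ.filter fun x => ¬ (f.eval x = g.eval x)).card = Fintype.card F := by
    simpa using Finset.card_filter_add_card_filter_not
      (s := (Finset.univ : Finset F)) (p := fun x => f.eval x = g.eval x)
  have h3 : hammingDist (fun x => f.eval x) (fun x => g.eval x)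
      = (Finset.univ.filter fun x => ¬ (f.eval x = g.eval x)).card := rfl
  omega

end Poly

/-- If the covering radius of `PRS(q+1, k)` is `q - k`, then deep holes of `RS(q, k)`
are not deep holes of `RS(q, k-1)`: any word `u_f` with `d(u_f, RS(q,k)) = q - k`
satisfies `d(u_f, RS(q,k-1)) ≤ q - k < q - k + 1 = ρ(RS(q,k-1))`. -/
theorem stmt3 {F : Type*} [Field F] [Fintype F] [DecidableEq F]
    (k : ℕ)
    (hodd : Odd (Fintype.card F) → 2 ≤ k ∧ k ≤ Fintype.card F - 2)
    (heven : Even (Fintype.card F) → 3 ≤ k ∧ k ≤ Fintype.card F - 3)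
    (hcov : covRad (PRS F k) = Fintype.card F - k)
    (f : F[X]) (hf : f.degree < (Fintype.card F : ℕ))
    (hdeep : errDist (fun x : F => f.eval x) (RSq F k) = Fintype.card F - k) :
    errDist (fun x : F => f.eval x) (RSq F (k - 1)) ≤ Fintype.card F - k ∧
    errDist (fun x : F => f.eval x) (RSq F (k - 1)) ≠ covRad (RSq F (k - 1)) := by
  classical
  set q := Fintype.card F with hq
  -- basic bounds on k
  have hk : 2 ≤ k ∧ k + 2 ≤ q := by
    rcases Nat.even_or_odd q with he | ho
    · have := heven he; omega
    · have := hodd ho; omega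
  obtain ⟨hk2, hkq⟩ := hk
  -- nonemptiness of the codes
  have hPRSne : (PRS F k).Nonempty := by
    refine ⟨fun _ => 0, 0, ?_, fun x => by simp, by simp⟩
    rw [Polynomial.degree_zero]
    exact WithBot.bot_lt_coe _
  have hRSne : ∀ m : ℕ, (RSq F m).Nonempty := by
    intro m
    refine ⟨fun _ => 0, 0, ?_, fun x => by simp⟩
    rw [Polynomial.degree_zero]
    exact WithBot.bot_lt_coe _
  -- extended word
  set w : Option F → F := fun o => o.elim 0 (fun x => f.eval x) with hw
  have h1 : errDist w (PRS F k) ≤ q - k := hcov ▸ errDist_le_covRad w hPRSne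
  obtain ⟨c, hc, hcd⟩ := exists_hamming_eq_errDist w hPRSne
  obtain ⟨g, hgdeg, hgval, hgnone⟩ := hc
  have hcsome : (fun x => c (some x)) = fun x => g.eval x := funext hgval
  have hsplit : hammingDist w c = (if w none = c none then 0 else 1) +
      hammingDist (fun x : F => f.eval x) (fun x => g.eval x) := by
    rw [hammingDist_option w c, ← hcsome]
    rfl
  have hug : (fun x : F => g.eval x) ∈ RSq F k := ⟨g, hgdeg, fun x => rfl⟩
  have hge : q - k ≤ hammingDist (fun x : F => f.eval x) (fun x => g.eval x) :=
    hdeep ▸ errDist_le_hamming _ hug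
  have hle : hammingDist w c ≤ q - k := hcd ▸ h1
  rw [hsplit] at hle
  have hcoeff : g.coeff (k - 1) = 0 := by
    by_contra h0
    have : ¬ (w none = c none) := by
      rw [hgnone]; simpa [hw] using fun h => h0 h.symm
    rw [if_neg this] at hle
    omega
  have hdle : hammingDist (fun x : F => f.eval x) (fun x => g.eval x) ≤ q - k := by
    split_ifs at hle <;> omega
  -- g has degree < k - 1
  have hgdeg' : g.degree < ((k - 1 : ℕ) : WithBot ℕ) := by
    rw [Polynomial.degree_lt_iff_coeff_zero]
    intro m hm
    rcases eq_or_lt_of_le hm with h | h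
    · exact h ▸ hcoeff
    · apply Polynomial.coeff_eq_zero_of_degree_lt
      apply lt_of_lt_of_le hgdeg
      exact_mod_cast Nat.cast_le.mpr (by omega)
  have hfirst : errDist (fun x : F => f.eval x) (RSq F (k - 1)) ≤ q - k :=
    le_trans (errDist_le_hamming _ ⟨g, hgdeg', fun x => rfl⟩) hdle
  refine ⟨hfirst, ?_⟩
  -- covering radius of RS(k-1) is at least q - (k-1)
  have hlower : q - (k - 1) ≤ covRad (RSq F (k - 1)) := by
    refine le_trans ?_ (errDist_le_covRad (fun x : F => (X ^ (k - 1) : F[X]).eval x)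
      (hRSne (k - 1)))
    apply le_errDist _ (hRSne (k - 1))
    rintro c ⟨g, hgdeg, hgval⟩
    have hcg : c = fun x => g.eval x := funext hgval
    subst hcg
    have hdX : (X ^ (k - 1) : F[X]).degree = ((k - 1 : ℕ) : WithBot ℕ) :=
      Polynomial.degree_X_pow _
    have hne : (X ^ (k - 1) : F[X]) ≠ g := by
      intro h
      rw [← h, hdX] at hgdeg
      exact lt_irrefl _ hgdeg
    have hdsub : ((X ^ (k - 1) : F[X]) - g).degree = ((k - 1 : ℕ) : WithBot ℕ) := by
      rw [Polynomial.degree_sub_eq_left_of_degree_lt (hdX ▸ hgdeg), hdX]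
    have hnd : ((X ^ (k - 1) : F[X]) - g).natDegree = k - 1 :=
      Polynomial.natDegree_eq_of_degree_eq_some hdsub
    have := hamming_eval_ge hne
    rw [hnd] at this
    exact this
  intro heq
  rw [heq] at hfirst
  omega
end

section
/- Let q be a prime power and let k be an integer with 2 ≤ k ≤ q−3. For any pairs (a_1,b_1), (a_2,b_2) ∈ F_q²∖{(0,0)} and any two distinct monic irreducible quadratic polynomials p_1(x) ≠ p_2(x) in F_q[x], there is no polynomial f ∈ F_q[x] of degree at most k−2 such that (a_1+b_1x)/p_1(x) = (a_2+b_2x)/p_2(x) + f(x) for all x ∈ F_q. -/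
open Polynomial

lemma aux_eval_ne_zero {F : Type*} [Field F] (p : F[X]) (hirr : Irreducible p)
    (hdeg : p.natDegree = 2) (x : F) : p.eval x ≠ 0 := by
  intro h
  have hdvd : (X - C x) ∣ p := dvd_iff_isRoot.mpr h
  obtain ⟨c, hc⟩ := hdvd
  rcases hirr.isUnit_or_isUnit hc with hu | hu
  · exact (Polynomial.not_isUnit_X_sub_C x) hu
  · have hc0 : c ≠ 0 := by
      rintro rfl
      simp at hc
      exact hirr.ne_zero hc
    have := Polynomial.natDegree_eq_zero_of_isUnit hu
    have hme : p.natDegree = (X - C x).natDegree + c.natDegree := by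
      rw [hc, Polynomial.natDegree_mul (Polynomial.X_sub_C_ne_zero x) hc0]
    rw [hdeg, Polynomial.natDegree_X_sub_C, this] at hme
    omega

/-- For `2 ≤ k ≤ q - 3`, deep hole cosets coming from distinct monic irreducible
quadratic polynomials are disjoint: there is no `f` of degree at most `k - 2` with
`(a₁+b₁x)/p₁(x) = (a₂+b₂x)/p₂(x) + f(x)` on all of `F_q`. -/
theorem stmt7 {F : Type*} [Field F] [Fintype F] [DecidableEq F]
    (k : ℕ) (hk2 : 2 ≤ k) (hk : k ≤ Fintype.card F - 3)
    (a1 b1 a2 b2 : F) (h1 : (a1, b1) ≠ (0, 0)) (h2 : (a2, b2) ≠ (0, 0))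
    (p1 p2 : F[X])
    (hp1 : p1.Monic ∧ Irreducible p1 ∧ p1.natDegree = 2)
    (hp2 : p2.Monic ∧ Irreducible p2 ∧ p2.natDegree = 2)
    (hne : p1 ≠ p2) :
    ¬ ∃ f : F[X], f.degree ≤ ((k - 2 : ℕ) : WithBot ℕ) ∧
      ∀ x : F, (a1 + b1 * x) / p1.eval x = (a2 + b2 * x) / p2.eval x + f.eval x := by
  rintro ⟨f, hfdeg, hf⟩
  obtain ⟨hm1, hi1, hd1⟩ := hp1
  obtain ⟨hm2, hi2, hd2⟩ := hp2
  have hq : 5 ≤ Fintype.card F := by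
    have := Fintype.card_pos (α := F)
    omega
  have hp1ne : p1 ≠ 0 := hi1.ne_zero
  have hp2ne : p2 ≠ 0 := hi2.ne_zero
  have hev1 : ∀ x : F, p1.eval x ≠ 0 := aux_eval_ne_zero p1 hi1 hd1
  have hev2 : ∀ x : F, p2.eval x ≠ 0 := aux_eval_ne_zero p2 hi2 hd2
  -- the polynomial identity candidate
  set g : F[X] := (C a1 + C b1 * X) * p2 - ((C a2 + C b2 * X) * p1 + f * (p1 * p2)) with hg
  have hgeval : ∀ x : F, g.eval x = 0 := by
    intro x
    have h := hf x
    have e1 := hev1 x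
    have e2 := hev2 x
    field_simp at h
    simp only [hg, eval_sub, eval_add, eval_mul, eval_C, eval_X]
    linear_combination h
  have hfnd : f.natDegree ≤ k - 2 := natDegree_le_iff_degree_le.mpr hfdeg
  have hgdeg : g.natDegree < Fintype.card F := by
    have h1d : ((C a1 + C b1 * X) * p2).natDegree ≤ 3 := by
      refine (natDegree_mul_le).trans ?_
      have : (C a1 + C b1 * X).natDegree ≤ 1 :=
        (natDegree_add_le _ _).trans (by simp only [natDegree_C, Nat.zero_le, max_le_iff, true_and]; exact (natDegree_C_mul_le _ _).trans_eq natDegree_X)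
      omega
    have h2d : ((C a2 + C b2 * X) * p1).natDegree ≤ 3 := by
      refine (natDegree_mul_le).trans ?_
      have : (C a2 + C b2 * X).natDegree ≤ 1 :=
        (natDegree_add_le _ _).trans (by simp only [natDegree_C, Nat.zero_le, max_le_iff, true_and]; exact (natDegree_C_mul_le _ _).trans_eq natDegree_X)
      omega
    have h3d : (f * (p1 * p2)).natDegree ≤ k + 2 := by
      refine (natDegree_mul_le).trans ?_
      have : (p1 * p2).natDegree ≤ 4 := (natDegree_mul_le).trans (by omega)
      omega
    have : g.natDegree ≤ k + 2 := by
      refine (natDegree_sub_le _ _).trans ?_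
      have := natDegree_add_le ((C a2 + C b2 * X) * p1) (f * (p1 * p2))
      simp only [max_le_iff] at *
      omega
    omega
  have hg0 : g = 0 := by
    apply Polynomial.eq_zero_of_natDegree_lt_card_of_eval_eq_zero' g Finset.univ
      (fun i _ => hgeval i)
    simpa using hgdeg
  have heq : (C a1 + C b1 * X) * p2 = (C a2 + C b2 * X) * p1 + f * (p1 * p2) :=
    sub_eq_zero.mp hg0
  have hdvd : p1 ∣ (C a1 + C b1 * X) * p2 := by
    rw [heq]
    exact dvd_add ⟨C a2 + C b2 * X, mul_comm _ _⟩ ⟨f * p2, by ring⟩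
  rcases (hi1.prime).2.2 _ _ hdvd with hA | hB
  · -- p1 divides a linear polynomial, so that polynomial is zero
    have hz : (C a1 + C b1 * X) = 0 := by
      by_contra hnz
      have hle := Polynomial.natDegree_le_of_dvd hA hnz
      have : (C a1 + C b1 * X).natDegree ≤ 1 :=
        (natDegree_add_le _ _).trans (by simp only [natDegree_C, Nat.zero_le, max_le_iff, true_and]; exact (natDegree_C_mul_le _ _).trans_eq natDegree_X)
      omega
    have ha : a1 = 0 := by
      have := congrArg (Polynomial.eval 0) hz
      simpa using this
    have hb : b1 = 0 := by
      have := congrArg (Polynomial.eval 1) hz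
      simp [ha] at this
      exact this
    exact h1 (by simp [ha, hb])
  · exact hne (Polynomial.eq_of_monic_of_associated hm1 hm2
      (hi1.associated_of_dvd hi2 hB))
end

section
/- Let q ≥ 5 be an odd prime power and let p_1(x), p_2(x), p_3(x) be pairwise distinct monic irreducible quadratic polynomials in F_q[x]. Then the following are equivalent: (i) there exist pairs (a_1,b_1), (a_2,b_2), (a_3,b_3) ∈ F_q²∖{(0,0)} and polynomials f_2, f_3 ∈ F_q[x] of degree at most q−4 such that (a_1+b_1x)/p_1(x) = (a_2+b_2x)/p_2(x) + f_2(x) and (a_1+b_1x)/p_1(x) = (a_3+b_3x)/p_3(x) + f_3(x) for all x ∈ F_q; (ii) there exists c ∈ F_q∖{0,1} with p_1(x) = c·p_2(x) + (1−c)·p_3(x). Moreover, such c, when it exists, is unique. -/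
open Polynomial

/-!
Write `Lᵢ = aᵢ + bᵢX` and `M = X^q - X`. Clearing denominators, the identity
`L₁/p₁ = L₂/p₂ + f` on `F_q` with `deg f ≤ q - 4` says that `L₁p₂ - L₂p₁ - f p₁p₂`, a polynomial
of degree `≤ q` vanishing on `F_q`, equals `μ M` for a scalar `μ`, necessarily nonzero. Modulo `p₁`
this reads `L₁ p₂ ≡ μ M`, and conversely every such congruence (with `L₁ ≠ 0`, `μ ≠ 0`) completes
to an identity of that shape, because `M` is a unit modulo each `pᵢ`.
If the same `L₁` works for `p₂` (with `μ₂`) and for `p₃` (with `μ₃`), eliminating `M` gives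
`p₁ ∣ μ₃p₂ - μ₂p₃`; this has degree `≤ 2` and leading coefficient `μ₃ - μ₂`, so it is
`(μ₃ - μ₂) p₁`, i.e. `p₁ = c p₂ + (1 - c) p₃` with `c = μ₃/(μ₃ - μ₂)`. Conversely, from such `c`
the congruence `L₁ p₂ ≡ M` forces `L₁ p₃ ≡ c/(c - 1) · M`.
-/

section CommRing

variable {R : Type*} [CommRing R]

lemma exists_degree_lt_dvd_mul_sub_of_isCoprime [Nontrivial R] {p a : R[X]} (hp : p.Monic)
    (hap : IsCoprime a p) {g : R[X]} (hg : ¬ p ∣ g) :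
    ∃ r : R[X], r ≠ 0 ∧ r.degree < p.degree ∧ p ∣ r * a - g := by
  obtain ⟨u, v, huv⟩ := hap
  have hdvd : p ∣ (g * u) %ₘ p * a - g :=
    ⟨-(g * u /ₘ p) * a - g * v, by
      linear_combination a * modByMonic_add_div (g * u) p + g * huv⟩
  refine ⟨(g * u) %ₘ p, fun h0 => hg ?_, degree_modByMonic_lt _ hp, hdvd⟩
  simpa [h0] using hdvd

lemma dvd_C_mul_sub_C_mul_of_dvd {p L q₁ q₂ g : R[X]} (hp : Prime p) (hL : ¬ p ∣ L)
    {μ₁ μ₂ : R} (h₁ : p ∣ L * q₁ - C μ₁ * g) (h₂ : p ∣ L * q₂ - C μ₂ * g) :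
    p ∣ C μ₂ * q₁ - C μ₁ * q₂ := by
  have h : p ∣ L * (C μ₂ * q₁ - C μ₁ * q₂) := by
    convert dvd_sub (h₁.mul_left (C μ₂)) (h₂.mul_left (C μ₁)) using 1
    ring
  exact (hp.dvd_or_dvd h).resolve_left hL

lemma exists_eq_C_add_C_mul_X_of_degree_le_one {r : R[X]} (hr : r ≠ 0) (hdeg : r.degree ≤ 1) :
    ∃ a b : R, (a, b) ≠ (0, 0) ∧ r = C a + C b * X := by
  have hr' := eq_X_add_C_of_degree_le_one hdeg
  refine ⟨r.coeff 0, r.coeff 1, fun h => hr ?_, by rw [hr']; simp; ring⟩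
  simp only [Prod.mk.injEq] at h
  rw [hr', h.1, h.2]
  simp

end CommRing

lemma div_eq_div_add_iff_mul_sub_eq_zero {K : Type*} [Field K] {a b c d e : K} (hb : b ≠ 0)
    (hd : d ≠ 0) : a / b = c / d + e ↔ a * d - c * b - e * b * d = 0 := by
  rw [div_add' _ _ _ hd, div_eq_div_iff hb hd]
  constructor <;> intro h <;> linear_combination h

section Field

variable {F : Type*} [Field F]

lemma C_add_C_mul_X_ne_zero {a b : F} (hab : (a, b) ≠ (0, 0)) : C a + C b * X ≠ 0 := by
  contrapose! hab
  have h₀ := congrArg (coeff · 0) hab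
  have h₁ := congrArg (coeff · 1) hab
  simp only [coeff_add, coeff_C, coeff_C_mul, coeff_X] at h₀ h₁
  simp_all

lemma natDegree_C_add_C_mul_X_le (a b : F) : (C a + C b * X).natDegree ≤ 1 := by
  rw [add_comm]
  exact natDegree_linear_le

lemma not_dvd_C_add_C_mul_X {p : F[X]} (hp : 2 ≤ p.natDegree) {a b : F}
    (hab : (a, b) ≠ (0, 0)) : ¬ p ∣ C a + C b * X := fun h => by
  have := natDegree_le_of_dvd h (C_add_C_mul_X_ne_zero hab)
  have := natDegree_C_add_C_mul_X_le a b
  omega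

lemma natDegree_linear_mul_sub_linear_mul_le {L₁ L₂ p₁ p₂ : F[X]} (h₁ : L₁.natDegree ≤ 1)
    (h₂ : L₂.natDegree ≤ 1) (hd₁ : p₁.natDegree = 2) (hd₂ : p₂.natDegree = 2) :
    (L₁ * p₂ - L₂ * p₁).natDegree ≤ 3 :=
  natDegree_sub_le_of_le (natDegree_mul_le_of_le h₁ hd₂.le) (natDegree_mul_le_of_le h₂ hd₁.le)

lemma eval_ne_zero_of_irreducible {p : F[X]} (hp : Irreducible p) (hd : p.natDegree ≠ 1)
    (x : F) : p.eval x ≠ 0 := fun h =>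
  hd (natDegree_eq_of_degree_eq_some (degree_eq_one_of_irreducible_of_root hp h))

lemma isCoprime_of_monic_of_irreducible_of_ne {p q : F[X]} (hp : p.Monic) (hq : q.Monic)
    (hip : Irreducible p) (hiq : Irreducible q) (hne : p ≠ q) : IsCoprime p q :=
  hip.coprime_iff_not_dvd.2 fun h =>
    hne (eq_of_monic_of_associated hp hq (hip.associated_of_dvd hiq h))

lemma exists_eq_C_mul_add_C_one_sub_mul_of_dvd {p₁ p₂ p₃ : F[X]} (hm₁ : p₁.Monic)
    (hm₂ : p₂.Monic) (hm₃ : p₃.Monic) (hd₂ : p₂.natDegree = p₁.natDegree)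
    (hd₃ : p₃.natDegree = p₁.natDegree) (h₂₃ : p₂ ≠ p₃) {μ ν : F} (hμ : μ ≠ 0) (hν : ν ≠ 0)
    (h : p₁ ∣ C μ * p₂ - C ν * p₃) :
    ∃ c : F, c ≠ 0 ∧ c ≠ 1 ∧ p₁ = C c * p₂ + C (1 - c) * p₃ := by
  set n := p₁.natDegree
  have hg := eq_leadingCoeff_mul_of_monic_of_dvd_of_natDegree_le hm₁ h
    ((natDegree_sub_le_of_le ((natDegree_C_mul_le μ p₂).trans hd₂.le)
      ((natDegree_C_mul_le ν p₃).trans hd₃.le)).trans (max_self n).le)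
  set k := (C μ * p₂ - C ν * p₃).leadingCoeff
  have hk : k = μ - ν := by
    have c₁ : p₁.coeff n = 1 := hm₁.coeff_natDegree
    have c₂ : p₂.coeff n = 1 := hd₂ ▸ hm₂.coeff_natDegree
    have c₃ : p₃.coeff n = 1 := hd₃ ▸ hm₃.coeff_natDegree
    have := congrArg (coeff · n) hg
    simp only [coeff_sub, coeff_C_mul, c₁, c₂, c₃, mul_one] at this
    linear_combination -this
  have hk₀ : μ - ν ≠ 0 := by
    intro h₀
    rw [hk, h₀, C_0, zero_mul, show ν = μ by linear_combination -h₀, ← mul_sub] at hg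
    exact h₂₃ (sub_eq_zero.1 ((mul_eq_zero.1 hg).resolve_left (C_ne_zero.2 hμ)))
  refine ⟨μ / (μ - ν), div_ne_zero hμ hk₀, fun h₁ => hν ?_, ?_⟩
  · rw [div_eq_one_iff_eq hk₀] at h₁
    linear_combination h₁
  · have e₂ : C (μ / (μ - ν)) * C (μ - ν) = C μ := by
      rw [← C_mul, div_mul_cancel₀ _ hk₀]
    have e₃ : C (1 - μ / (μ - ν)) * C (μ - ν) = - C ν := by
      rw [← C_mul, ← C_neg]
      congr 1
      field_simp
      ring
    apply mul_left_cancel₀ (C_ne_zero.2 hk₀)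
    rw [hk] at hg
    linear_combination -hg - p₂ * e₂ - p₃ * e₃

lemma dvd_mul_sub_C_mul_of_eq_C_mul_add_C_one_sub_mul {p₁ p₂ p₃ L g : F[X]} {c μ : F}
    (hc : c ≠ 1) (hp : p₁ = C c * p₂ + C (1 - c) * p₃) (h : p₁ ∣ L * p₂ - C μ * g) :
    p₁ ∣ L * p₃ - C (c * μ / (c - 1)) * g := by
  have hc' : 1 - c ≠ 0 := sub_ne_zero.2 hc.symm
  have e : C (1 - c) * C (c * μ / (c - 1)) = -(C c * C μ) := by
    rw [← C_mul, ← C_mul, ← C_neg]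
    congr 1
    field_simp
    ring
  rw [← (isUnit_C.2 hc'.isUnit).dvd_mul_left]
  convert dvd_sub (dvd_mul_left p₁ L) (h.mul_left (C c)) using 1
  linear_combination (-L) * hp - g * e

lemma eq_of_C_mul_add_C_one_sub_mul_eq {p₂ p₃ : F[X]} (h₂₃ : p₂ ≠ p₃) {c c' : F}
    (h : C c * p₂ + C (1 - c) * p₃ = C c' * p₂ + C (1 - c') * p₃) : c = c' := by
  have h' : C (c - c') * (p₂ - p₃) = 0 := by
    simp only [map_sub, map_one] at h ⊢
    linear_combination h
  rcases mul_eq_zero.1 h' with h₀ | h₀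
  · exact sub_eq_zero.1 (C_eq_zero.1 h₀)
  · exact absurd (sub_eq_zero.1 h₀) h₂₃

end Field

section FiniteField

variable {F : Type*} [Field F] [Fintype F]

lemma X_pow_card_sub_X_splits : (X ^ Fintype.card F - X : F[X]).Splits := by
  rw [splits_iff_card_roots, FiniteField.roots_X_pow_card_sub_X,
    FiniteField.X_pow_card_sub_X_natDegree_eq F Fintype.one_lt_card]
  rfl

lemma X_pow_card_sub_X_dvd_of_forall_eval_eq_zero {P : F[X]} (h : ∀ x, P.eval x = 0) :
    X ^ Fintype.card F - X ∣ P := by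
  rcases eq_or_ne P 0 with rfl | hP
  · exact dvd_zero _
  refine X_pow_card_sub_X_splits.dvd_of_roots_le_roots
    (FiniteField.X_pow_card_sub_X_ne_zero F Fintype.one_lt_card) ?_
  rw [FiniteField.roots_X_pow_card_sub_X, Multiset.le_iff_subset Finset.univ.nodup]
  exact fun x _ => (mem_roots hP).2 (h x)

lemma exists_eq_C_mul_X_pow_card_sub_X_of_forall_eval_eq_zero {P : F[X]}
    (hdeg : P.natDegree ≤ Fintype.card F) (h : ∀ x, P.eval x = 0) :
    ∃ μ : F, P = C μ * (X ^ Fintype.card F - X) := by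
  obtain ⟨g, rfl⟩ := X_pow_card_sub_X_dvd_of_forall_eval_eq_zero h
  rcases eq_or_ne g 0 with rfl | hg
  · exact ⟨0, by simp⟩
  have hq : 1 < Fintype.card F := Fintype.one_lt_card
  rw [natDegree_mul (FiniteField.X_pow_card_sub_X_ne_zero F hq) hg,
    FiniteField.X_pow_card_sub_X_natDegree_eq F hq] at hdeg
  exact ⟨g.coeff 0, by rw [mul_comm, ← eq_C_of_natDegree_eq_zero (p := g) (by omega)]⟩

lemma isCoprime_X_pow_card_sub_X_of_irreducible {p : F[X]} (hp : Irreducible p)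
    (hd : p.natDegree ≠ 1) : IsCoprime p (X ^ Fintype.card F - X) :=
  hp.coprime_iff_not_dvd.2 fun h => hd <|
    (X_pow_card_sub_X_splits.of_dvd (FiniteField.X_pow_card_sub_X_ne_zero F Fintype.one_lt_card)
      h).natDegree_eq_one_of_irreducible hp

lemma exists_pair_dvd_mul_sub_C_mul_X_pow_card_sub_X {p₁ p₂ : F[X]}
    (hp₁ : p₁.Monic ∧ Irreducible p₁ ∧ p₁.natDegree = 2) (hcop : IsCoprime p₂ p₁) {μ : F}
    (hμ : μ ≠ 0) :
    ∃ a b : F, (a, b) ≠ (0, 0) ∧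
      p₁ ∣ (C a + C b * X) * p₂ - C μ * (X ^ Fintype.card F - X) := by
  obtain ⟨hm₁, hi₁, hd₁⟩ := hp₁
  have hndvd : ¬ p₁ ∣ C μ * (X ^ Fintype.card F - X) := by
    rw [(isUnit_C.2 hμ.isUnit).dvd_mul_left]
    exact hi₁.coprime_iff_not_dvd.1 (isCoprime_X_pow_card_sub_X_of_irreducible hi₁ (by omega))
  obtain ⟨r, hr₀, hrdeg, hr⟩ := exists_degree_lt_dvd_mul_sub_of_isCoprime hm₁ hcop hndvd
  have hrdeg' : r.degree ≤ 1 := by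
    have := natDegree_lt_natDegree hr₀ hrdeg
    exact natDegree_le_iff_degree_le.1 (show r.natDegree ≤ 1 by omega)
  obtain ⟨a, b, hab, rfl⟩ := exists_eq_C_add_C_mul_X_of_degree_le_one hr₀ hrdeg'
  exact ⟨a, b, hab, hr⟩

def MatchesModLowDegree (p₁ p₂ : F[X]) (a₁ b₁ : F) : Prop :=
  ∃ a₂ b₂ : F, (a₂, b₂) ≠ (0, 0) ∧
    ∃ f : F[X], f.degree ≤ ((Fintype.card F - 4 : ℕ) : WithBot ℕ) ∧
      ∀ x : F, (a₁ + b₁ * x) / p₁.eval x = (a₂ + b₂ * x) / p₂.eval x + f.eval x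

variable {p₁ p₂ : F[X]} {a₁ b₁ : F}

lemma MatchesModLowDegree.exists_dvd (hq : 4 ≤ Fintype.card F)
    (hp₁ : Irreducible p₁ ∧ p₁.natDegree = 2) (hp₂ : Irreducible p₂ ∧ p₂.natDegree = 2)
    (hcop : IsCoprime p₁ p₂) (hab : (a₁, b₁) ≠ (0, 0)) (h : MatchesModLowDegree p₁ p₂ a₁ b₁) :
    ∃ μ : F, μ ≠ 0 ∧ p₁ ∣ (C a₁ + C b₁ * X) * p₂ - C μ * (X ^ Fintype.card F - X) := by
  obtain ⟨hi₁, hd₁⟩ := hp₁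
  obtain ⟨hi₂, hd₂⟩ := hp₂
  obtain ⟨a₂, b₂, -, f, hf, heq⟩ := h
  set L₁ := C a₁ + C b₁ * X
  set L₂ := C a₂ + C b₂ * X
  have hvanish : ∀ x, (L₁ * p₂ - L₂ * p₁ - f * p₁ * p₂).eval x = 0 := fun x => by
    have := (div_eq_div_add_iff_mul_sub_eq_zero (eval_ne_zero_of_irreducible hi₁ (by omega) x)
      (eval_ne_zero_of_irreducible hi₂ (by omega) x)).1 (heq x)
    simpa [L₁, L₂] using this
  have hdeg : (L₁ * p₂ - L₂ * p₁ - f * p₁ * p₂).natDegree ≤ Fintype.card F := by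
    have hcross := natDegree_linear_mul_sub_linear_mul_le (natDegree_C_add_C_mul_X_le a₁ b₁)
      (natDegree_C_add_C_mul_X_le a₂ b₂) hd₁ hd₂
    have hf' := natDegree_mul_le_of_le (natDegree_mul_le_of_le
      (natDegree_le_iff_degree_le.2 hf) hd₁.le) hd₂.le
    exact (natDegree_sub_le_of_le hcross hf').trans (by omega)
  obtain ⟨μ, hμ⟩ := exists_eq_C_mul_X_pow_card_sub_X_of_forall_eval_eq_zero hdeg hvanish
  have hdvd : p₁ ∣ L₁ * p₂ - C μ * (X ^ Fintype.card F - X) :=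
    ⟨L₂ + f * p₂, by linear_combination hμ⟩
  refine ⟨μ, ?_, hdvd⟩
  rintro rfl
  rw [C_0, zero_mul, sub_zero] at hdvd
  exact not_dvd_C_add_C_mul_X hd₁.ge hab
    ((hi₁.prime.dvd_or_dvd hdvd).resolve_right (hi₁.coprime_iff_not_dvd.1 hcop))

lemma matchesModLowDegree_of_dvd (hq : 4 ≤ Fintype.card F)
    (hp₁ : p₁.Monic ∧ Irreducible p₁ ∧ p₁.natDegree = 2)
    (hp₂ : p₂.Monic ∧ Irreducible p₂ ∧ p₂.natDegree = 2) (hcop : IsCoprime p₁ p₂) {μ : F}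
    (hμ : μ ≠ 0) (hdvd : p₁ ∣ (C a₁ + C b₁ * X) * p₂ - C μ * (X ^ Fintype.card F - X)) :
    MatchesModLowDegree p₁ p₂ a₁ b₁ := by
  obtain ⟨a₂, b₂, hab₂, hdvd₂⟩ :=
    exists_pair_dvd_mul_sub_C_mul_X_pow_card_sub_X hp₂ hcop (neg_ne_zero.2 hμ)
  obtain ⟨hm₁, hi₁, hd₁⟩ := hp₁
  obtain ⟨hm₂, hi₂, hd₂⟩ := hp₂
  set L₁ := C a₁ + C b₁ * X
  set L₂ := C a₂ + C b₂ * X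
  obtain ⟨f, hf⟩ : p₁ * p₂ ∣ L₁ * p₂ - L₂ * p₁ - C μ * (X ^ Fintype.card F - X) := by
    refine hcop.mul_dvd ?_ ?_
    · convert dvd_sub hdvd (dvd_mul_left p₁ L₂) using 1
      ring
    · convert dvd_sub (dvd_mul_left p₂ L₁) hdvd₂ using 1
      rw [C_neg]
      ring
  refine ⟨a₂, b₂, hab₂, f, ?_, fun x => ?_⟩
  · rcases eq_or_ne f 0 with rfl | hf₀
    · simp
    have hcross := natDegree_linear_mul_sub_linear_mul_le (natDegree_C_add_C_mul_X_le a₁ b₁)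
      (natDegree_C_add_C_mul_X_le a₂ b₂) hd₁ hd₂
    have hdeg := (natDegree_sub_le_of_le hcross (natDegree_C_mul_le μ _)).trans
      (max_le (show 3 ≤ Fintype.card F by omega)
        (FiniteField.X_pow_card_sub_X_natDegree_eq F Fintype.one_lt_card).le)
    rw [hf, (hm₁.mul hm₂).natDegree_mul' hf₀, natDegree_mul hm₁.ne_zero hm₂.ne_zero, hd₁,
      hd₂] at hdeg
    exact natDegree_le_iff_degree_le.1 (by omega)
  · have hx := congrArg (eval x) hf
    simp only [eval_sub, eval_mul, eval_pow, eval_C, eval_X, FiniteField.pow_card, sub_self,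
      mul_zero, sub_zero, eval_add, L₁, L₂] at hx
    rw [div_eq_div_add_iff_mul_sub_eq_zero (eval_ne_zero_of_irreducible hi₁ (by omega) x)
      (eval_ne_zero_of_irreducible hi₂ (by omega) x)]
    linear_combination hx

end FiniteField

theorem stmt11_general {F : Type*} [Field F] [Fintype F]
    (hq : 5 ≤ Fintype.card F)
    (p1 p2 p3 : F[X])
    (hp1 : p1.Monic ∧ Irreducible p1 ∧ p1.natDegree = 2)
    (hp2 : p2.Monic ∧ Irreducible p2 ∧ p2.natDegree = 2)
    (hp3 : p3.Monic ∧ Irreducible p3 ∧ p3.natDegree = 2)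
    (h12 : p1 ≠ p2) (h13 : p1 ≠ p3) (h23 : p2 ≠ p3) :
    ((∃ a1 b1 : F, (a1, b1) ≠ (0, 0) ∧
        (∃ a2 b2 : F, (a2, b2) ≠ (0, 0) ∧
          ∃ f2 : F[X], f2.degree ≤ ((Fintype.card F - 4 : ℕ) : WithBot ℕ) ∧
            ∀ x : F, (a1 + b1 * x) / p1.eval x
              = (a2 + b2 * x) / p2.eval x + f2.eval x) ∧
        (∃ a3 b3 : F, (a3, b3) ≠ (0, 0) ∧
          ∃ f3 : F[X], f3.degree ≤ ((Fintype.card F - 4 : ℕ) : WithBot ℕ) ∧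
            ∀ x : F, (a1 + b1 * x) / p1.eval x
              = (a3 + b3 * x) / p3.eval x + f3.eval x))
      ↔ ∃ c : F, c ≠ 0 ∧ c ≠ 1 ∧ p1 = C c * p2 + C (1 - c) * p3) ∧
    (∀ c c' : F, c ≠ 0 → c ≠ 1 → c' ≠ 0 → c' ≠ 1 →
      p1 = C c * p2 + C (1 - c) * p3 → p1 = C c' * p2 + C (1 - c') * p3 →
      c = c') := by
  have hq₄ : 4 ≤ Fintype.card F := by omega
  have hc₁₂ := isCoprime_of_monic_of_irreducible_of_ne hp1.1 hp2.1 hp1.2.1 hp2.2.1 h12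
  have hc₁₃ := isCoprime_of_monic_of_irreducible_of_ne hp1.1 hp3.1 hp1.2.1 hp3.2.1 h13
  refine ⟨⟨?_, ?_⟩, fun c c' _ _ _ _ h h' =>
    eq_of_C_mul_add_C_one_sub_mul_eq h23 (h.symm.trans h')⟩
  · rintro ⟨a1, b1, hab, h₂, h₃⟩
    obtain ⟨μ₂, hμ₂, hdvd₂⟩ := MatchesModLowDegree.exists_dvd hq₄ hp1.2 hp2.2 hc₁₂ hab h₂
    obtain ⟨μ₃, hμ₃, hdvd₃⟩ := MatchesModLowDegree.exists_dvd hq₄ hp1.2 hp3.2 hc₁₃ hab h₃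
    exact exists_eq_C_mul_add_C_one_sub_mul_of_dvd hp1.1 hp2.1 hp3.1
      (hp2.2.2.trans hp1.2.2.symm) (hp3.2.2.trans hp1.2.2.symm) h23 hμ₃ hμ₂
      (dvd_C_mul_sub_C_mul_of_dvd hp1.2.1.prime (not_dvd_C_add_C_mul_X hp1.2.2.ge hab)
        hdvd₂ hdvd₃)
  · rintro ⟨c, hc₀, hc₁, hp⟩
    obtain ⟨a1, b1, hab, hdvd⟩ :=
      exists_pair_dvd_mul_sub_C_mul_X_pow_card_sub_X hp1 hc₁₂.symm one_ne_zero
    exact ⟨a1, b1, hab, matchesModLowDegree_of_dvd hq₄ hp1 hp2 hc₁₂ one_ne_zero hdvd,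
      matchesModLowDegree_of_dvd hq₄ hp1 hp3 hc₁₃
        (div_ne_zero (mul_ne_zero hc₀ one_ne_zero) (sub_ne_zero.2 hc₁))
        (dvd_mul_sub_C_mul_of_eq_C_mul_add_C_one_sub_mul hc₁ hp hdvd)⟩

/-- For odd `q ≥ 5` and pairwise distinct monic irreducible quadratics
`p₁, p₂, p₃`: there is a common nonzero rational function `(a₁+b₁x)/p₁(x)` agreeing
(up to low-degree polynomials) with nonzero rational functions with denominators
`p₂` and `p₃` if and only if `p₁ = c p₂ + (1-c) p₃` for some `c ∉ {0, 1}`; moreover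
such `c` is unique. -/
theorem stmt11 {F : Type*} [Field F] [Fintype F] [DecidableEq F]
    (hq : 5 ≤ Fintype.card F) (hodd : Odd (Fintype.card F))
    (p1 p2 p3 : F[X])
    (hp1 : p1.Monic ∧ Irreducible p1 ∧ p1.natDegree = 2)
    (hp2 : p2.Monic ∧ Irreducible p2 ∧ p2.natDegree = 2)
    (hp3 : p3.Monic ∧ Irreducible p3 ∧ p3.natDegree = 2)
    (h12 : p1 ≠ p2) (h13 : p1 ≠ p3) (h23 : p2 ≠ p3) :
    ((∃ a1 b1 : F, (a1, b1) ≠ (0, 0) ∧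
        (∃ a2 b2 : F, (a2, b2) ≠ (0, 0) ∧
          ∃ f2 : F[X], f2.degree ≤ ((Fintype.card F - 4 : ℕ) : WithBot ℕ) ∧
            ∀ x : F, (a1 + b1 * x) / p1.eval x
              = (a2 + b2 * x) / p2.eval x + f2.eval x) ∧
        (∃ a3 b3 : F, (a3, b3) ≠ (0, 0) ∧
          ∃ f3 : F[X], f3.degree ≤ ((Fintype.card F - 4 : ℕ) : WithBot ℕ) ∧
            ∀ x : F, (a1 + b1 * x) / p1.eval x
              = (a3 + b3 * x) / p3.eval x + f3.eval x))
      ↔ ∃ c : F, c ≠ 0 ∧ c ≠ 1 ∧ p1 = C c * p2 + C (1 - c) * p3) ∧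
    (∀ c c' : F, c ≠ 0 → c ≠ 1 → c' ≠ 0 → c' ≠ 1 →
      p1 = C c * p2 + C (1 - c) * p3 → p1 = C c' * p2 + C (1 - c') * p3 →
      c = c') :=
  stmt11_general hq p1 p2 p3 hp1 hp2 hp3 h12 h13 h23
end
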